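/- arXiv:1508.01059 — 5 statements merged into one kernel-verified Lean document; each statement's English description precedes it below -/
import Mathlib

section
/- Consider a game with M players, where each player i has a feasible strategy set A^i ⊆ ℕ^n, a joint allocation is a tuple b = (b^1, …, b^M) ∈ (ℕ^n)^M, F : (ℕ^n)^M → ℝ≥0 is a social utility function, and f^i : (ℕ^n)^M → ℝ≥0 are player payoff functions. Suppose: (U1) F is monotone and submodular over the integer lattice ℕ^{M×n}; (U2) F(b) ≥ Σ_{i=1}^M f^i(b) for every b; (U3) f^i(b) ≥ F(b^i, b^{−i}) − F(0, b^{−i}) for every i and b. Let b with b^i ∈ A^i for all i be a pure Nash equilibrium, i.e., f^i(b^i, b^{−i}) ≥ f^i(b̃^i, b^{−i}) for every i and every b̃^i ∈ A^i. Then for every feasible allocation b* with b*^i ∈ A^i for all i, F(b*) ≤ 2 F(b). -/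
/-!
Join the equilibrium `b` with the optimum `b*` one player at a time. By submodularity the gain
of adding `b*^i` on top of `b` joined with the earlier players' `b*^j` is at most the gain
`F(b*^i, b^{-i}) - F(0, b^{-i})`, which (U3) bounds by `f^i(b*^i, b^{-i})` and the equilibrium
condition by `f^i(b)`. Summing, `F(b*) ≤ F(b ∨ b*) ≤ F(b) + Σ f^i(b) ≤ 2 F(b)` by monotonicity
and (U2).
-/

open Finset Function

def IsSubmodular {α : Type*} [Lattice α] (F : α → ℝ) : Prop :=
  ∀ x y, F (x ⊔ y) + F (x ⊓ y) ≤ F x + F y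

namespace IsSubmodular

section Lattice

variable {α : Type*} [Lattice α] {F : α → ℝ}

theorem sup_sub_le_sub_of_le_inf (hF : IsSubmodular F) (hF_mono : Monotone F) {x z w : α}
    (hw : w ≤ x ⊓ z) : F (x ⊔ z) - F z ≤ F x - F w := by
  linarith [hF x z, hF_mono hw]

end Lattice

section Pi

variable {ι : Type*} [DecidableEq ι] {α : ι → Type*} [∀ i, Lattice (α i)] [∀ i, OrderBot (α i)]
  {F : (∀ i, α i) → ℝ}

theorem piecewise_sup_sub_le_sum (hF : IsSubmodular F) (hF_mono : Monotone F)
    (b c : ∀ i, α i) (s : Finset ι) :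
    F (s.piecewise (b ⊔ c) b) - F b ≤ ∑ i ∈ s, (F (update b i (c i)) - F (update b i ⊥)) := by
  induction s using Finset.induction_on with
  | empty => simp
  | insert i s hi ih =>
    have hsup : update b i (c i) ⊔ s.piecewise (b ⊔ c) b = (insert i s).piecewise (b ⊔ c) b := by
      ext j
      rcases eq_or_ne j i with rfl | hj
      · simp [hi, sup_comm]
      · by_cases hjs : j ∈ s <;> simp [hj, hjs]
    have hinf : update b i ⊥ ≤ update b i (c i) ⊓ s.piecewise (b ⊔ c) b := by
      intro j
      rcases eq_or_ne j i with rfl | hj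
      · simp
      · by_cases hjs : j ∈ s <;> simp [hj, hjs]
    have hgain := hF.sup_sub_le_sub_of_le_inf hF_mono hinf
    rw [hsup] at hgain
    rw [sum_insert hi]
    linarith

theorem sup_sub_le_sum [Fintype ι] (hF : IsSubmodular F) (hF_mono : Monotone F)
    (b c : ∀ i, α i) :
    F (b ⊔ c) - F b ≤ ∑ i, (F (update b i (c i)) - F (update b i ⊥)) := by
  simpa using hF.piecewise_sup_sub_le_sum hF_mono b c univ

end Pi

end IsSubmodular

open Finset in
theorem utility_game_poa_le_two_general {M n : ℕ}
    (A : Fin M → Set (Fin n → ℕ))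
    (F : (Fin M → Fin n → ℕ) → ℝ)
    (f : Fin M → (Fin M → Fin n → ℕ) → ℝ)
    -- (U1) F is monotone and submodular over the integer lattice ℕ^{M×n}
    (hF_mono : Monotone F)
    (hF_submod : ∀ x y : Fin M → Fin n → ℕ, F (x ⊔ y) + F (x ⊓ y) ≤ F x + F y)
    -- (U2)
    (hU2 : ∀ b, ∑ i, f i b ≤ F b)
    -- (U3)
    (hU3 : ∀ (b : Fin M → Fin n → ℕ) (i : Fin M),
      F b - F (Function.update b i 0) ≤ f i b)
    -- b is a feasible pure Nash equilibrium
    (b : Fin M → Fin n → ℕ)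
    (hNE : ∀ (i : Fin M), ∀ b' ∈ A i, f i (Function.update b i b') ≤ f i b)
    -- b* is any feasible allocation
    (bstar : Fin M → Fin n → ℕ) (hbstar_feas : ∀ i, bstar i ∈ A i) :
    F bstar ≤ 2 * F b := by
  have hdeviation (i : Fin M) :
      F (update b i (bstar i)) - F (update b i 0) ≤ f i b := by
    have hU3i := hU3 (update b i (bstar i)) i
    rw [update_idem] at hU3i
    linarith [hNE i (bstar i) (hbstar_feas i)]
  calc F bstar ≤ F (b ⊔ bstar) := hF_mono le_sup_right
    _ ≤ F b + ∑ i, (F (update b i (bstar i)) - F (update b i 0)) :=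
      -- `⊥ = 0` in `Fin n → ℕ` holds definitionally
      sub_le_iff_le_add'.mp (IsSubmodular.sup_sub_le_sum hF_submod hF_mono b bstar)
    _ ≤ F b + ∑ i, f i b := by gcongr with i; exact hdeviation i
    _ ≤ 2 * F b := by linarith [hU2 b]

open Finset in
/-- Price of anarchy of a monotone utility game on the integer lattice (conditions
U1–U3) is at most 2: any pure Nash equilibrium `b` satisfies `F(b*) ≤ 2 F(b)` for
every feasible allocation `b*`. -/
theorem utility_game_poa_le_two {M n : ℕ}
    (A : Fin M → Set (Fin n → ℕ))
    (F : (Fin M → Fin n → ℕ) → ℝ)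
    (f : Fin M → (Fin M → Fin n → ℕ) → ℝ)
    (hF_nonneg : ∀ b, 0 ≤ F b)
    (hf_nonneg : ∀ i b, 0 ≤ f i b)
    -- (U1) F is monotone and submodular over the integer lattice ℕ^{M×n}
    (hF_mono : Monotone F)
    (hF_submod : ∀ x y : Fin M → Fin n → ℕ, F (x ⊔ y) + F (x ⊓ y) ≤ F x + F y)
    -- (U2)
    (hU2 : ∀ b, ∑ i, f i b ≤ F b)
    -- (U3)
    (hU3 : ∀ (b : Fin M → Fin n → ℕ) (i : Fin M),
      F b - F (Function.update b i 0) ≤ f i b)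
    -- b is a feasible pure Nash equilibrium
    (b : Fin M → Fin n → ℕ) (hb_feas : ∀ i, b i ∈ A i)
    (hNE : ∀ (i : Fin M), ∀ b' ∈ A i, f i (Function.update b i b') ≤ f i b)
    -- b* is any feasible allocation
    (bstar : Fin M → Fin n → ℕ) (hbstar_feas : ∀ i, bstar i ∈ A i) :
    F bstar ≤ 2 * F b :=
  utility_game_poa_le_two_general A F f hF_mono hF_submod hU2 hU3 b hNE bstar hbstar_feas
end

section
/- Fix a finite directed graph on vertex set V, in-neighborhoods N(u) ⊆ V, and thresholds t^u_v ∈ ℕ for every u ∈ V and v ∈ N(u). For a budget allocation b ∈ ℕ^V, let I(b) ⊆ V be the smallest set S such that {v : b_v > 0} ⊆ S and, for every u ∈ V, if there exists v ∈ N(u) ∩ S with b_v ≥ t^u_v and (b_v > 0 or t^u_v = 0), then u ∈ S. Then the function f_σ : ℕ^V → ℝ≥0 given by f_σ(b) = |I(b)| is monotone and submodular over the integer lattice. -/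
/-!
Raising a budget only weakens the closure conditions, so `I` is monotone; hence
`I (x ⊓ y) ⊆ I x ∩ I y`. Conversely `I x ∪ I y` is closed for `x ⊔ y`: a trigger
with positive threshold `t ≤ max (x v) (y v)` already seeds `v` and fires in one of
the two runs, and a zero-threshold trigger fires in whichever run contains `v`.
So `I (x ⊔ y) ⊆ I x ∪ I y`, and inclusion–exclusion gives submodularity of `|I|`.
-/

theorem Set.ncard_apply_sup_add_ncard_apply_inf_le {α β : Type*} [Lattice α] [Finite β]
    {F : α → Set β} (hF : Monotone F) (hsup : ∀ x y, F (x ⊔ y) ⊆ F x ∪ F y) (x y : α) :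
    (F (x ⊔ y)).ncard + (F (x ⊓ y)).ncard ≤ (F x).ncard + (F y).ncard := by
  have hinf : F (x ⊓ y) ⊆ F x ∩ F y :=
    Set.subset_inter (hF inf_le_left) (hF inf_le_right)
  calc (F (x ⊔ y)).ncard + (F (x ⊓ y)).ncard
      ≤ (F x ∪ F y).ncard + (F x ∩ F y).ncard :=
        add_le_add (Set.ncard_mono (hsup x y)) (Set.ncard_mono hinf)
    _ = (F x).ncard + (F y).ncard := Set.ncard_union_add_ncard_inter _ _

namespace BudgetedTriggering

variable {V : Type*} (N : V → Set V) (t : V → V → ℕ)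

def IsInfluenceClosed (b : V → ℕ) (S : Set V) : Prop :=
  {v | 0 < b v} ⊆ S ∧
    ∀ u, (∃ v ∈ N u, v ∈ S ∧ t u v ≤ b v ∧ (0 < b v ∨ t u v = 0)) → u ∈ S

def influenceSet (b : V → ℕ) : Set V :=
  ⋂₀ {S | IsInfluenceClosed N t b S}

variable {N t}

theorem influenceSet_subset {b : V → ℕ} {S : Set V} (hS : IsInfluenceClosed N t b S) :
    influenceSet N t b ⊆ S :=
  Set.sInter_subset_of_mem hS

theorem isInfluenceClosed_influenceSet (b : V → ℕ) :
    IsInfluenceClosed N t b (influenceSet N t b) := by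
  refine ⟨fun v hv S hS => hS.1 hv, ?_⟩
  rintro u ⟨v, hvN, hvI, hle, hpos⟩ S hS
  exact hS.2 u ⟨v, hvN, influenceSet_subset hS hvI, hle, hpos⟩

theorem IsInfluenceClosed.of_le {b b' : V → ℕ} {S : Set V} (hb : b ≤ b')
    (hS : IsInfluenceClosed N t b' S) : IsInfluenceClosed N t b S := by
  refine ⟨fun v hv => hS.1 (lt_of_lt_of_le hv (hb v)), ?_⟩
  rintro u ⟨v, hvN, hvS, hle, hpos⟩
  exact hS.2 u ⟨v, hvN, hvS, hle.trans (hb v), hpos.imp (fun h => h.trans_le (hb v)) id⟩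

theorem influenceSet_mono : Monotone (influenceSet N t) := fun _ _ hb =>
  influenceSet_subset ((isInfluenceClosed_influenceSet _).of_le hb)

theorem mem_influenceSet_of_trigger {b : V → ℕ} {u v : V} (hvN : v ∈ N u)
    (hv : v ∈ influenceSet N t b ∨ 0 < t u v) (hle : t u v ≤ b v) :
    u ∈ influenceSet N t b := by
  have hclosed := isInfluenceClosed_influenceSet (N := N) (t := t) b
  rcases Nat.eq_zero_or_pos (t u v) with ht | ht
  · exact hclosed.2 u ⟨v, hvN, hv.resolve_right (by omega), hle, Or.inr ht⟩
  · have hb : 0 < b v := ht.trans_le hle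
    exact hclosed.2 u ⟨v, hvN, hclosed.1 hb, hle, Or.inl hb⟩

theorem isInfluenceClosed_sup_union (x y : V → ℕ) :
    IsInfluenceClosed N t (x ⊔ y) (influenceSet N t x ∪ influenceSet N t y) := by
  constructor
  · intro v hv
    rcases lt_sup_iff.mp (show 0 < x v ⊔ y v from hv) with hx | hy
    · exact Or.inl ((isInfluenceClosed_influenceSet x).1 hx)
    · exact Or.inr ((isInfluenceClosed_influenceSet y).1 hy)
  · rintro u ⟨v, hvN, hvS, hle, -⟩
    rcases Nat.eq_zero_or_pos (t u v) with ht | ht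
    · exact hvS.imp (fun h => mem_influenceSet_of_trigger hvN (.inl h) (ht ▸ Nat.zero_le _))
        (fun h => mem_influenceSet_of_trigger hvN (.inl h) (ht ▸ Nat.zero_le _))
    · exact (le_sup_iff.mp hle).imp (mem_influenceSet_of_trigger hvN (.inr ht))
        (mem_influenceSet_of_trigger hvN (.inr ht))

theorem influenceSet_sup_subset (x y : V → ℕ) :
    influenceSet N t (x ⊔ y) ⊆ influenceSet N t x ∪ influenceSet N t y :=
  influenceSet_subset (isInfluenceClosed_sup_union x y)

end BudgetedTriggering

open BudgetedTriggering in
/-- The deterministic influence function of the Budgeted Triggering model (for a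
fixed realization of the triggering vectors) is monotone and submodular over the
integer lattice. Here `I b` is the smallest set containing every node with
positive budget and closed under the propagation rule, and `f_σ(b) = |I(b)|`. -/
theorem budgeted_triggering_influence_monotone_submodular
    {V : Type*} [Fintype V] (N : V → Set V) (t : V → V → ℕ)
    (I : (V → ℕ) → Set V)
    (hI : ∀ b : V → ℕ,
      I b = ⋂₀ {S : Set V | {v | 0 < b v} ⊆ S ∧
        ∀ u, (∃ v ∈ N u, v ∈ S ∧ t u v ≤ b v ∧ (0 < b v ∨ t u v = 0)) → u ∈ S}) :
    Monotone (fun b : V → ℕ => ((I b).ncard : ℝ)) ∧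
      ∀ x y : V → ℕ,
        ((I (x ⊔ y)).ncard : ℝ) + ((I (x ⊓ y)).ncard : ℝ) ≤
          ((I x).ncard : ℝ) + ((I y).ncard : ℝ) := by
  obtain rfl : I = influenceSet N t := funext hI
  refine ⟨fun b b' hb => ?_, fun x y => ?_⟩
  · exact Nat.cast_le.mpr (Set.ncard_mono (influenceSet_mono hb))
  · exact_mod_cast Set.ncard_apply_sup_add_ncard_apply_inf_le influenceSet_mono
      influenceSet_sup_subset x y
end

section
/- Let f : ℕ^n → ℝ≥0 be monotone and submodular over the integer lattice, let b, y ∈ ℕ^n, let B > 0 and T ≥ 0 be reals with Σ_{i=1}^n y_i ≤ B, and suppose that for every coordinate i with y_i > b_i it holds that f(b ∨ y_i χ_i) − f(b) ≤ T · y_i. Then f(y) ≤ f(b) + T · B. -/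
/-!
Raise `b` one coordinate at a time to `b ∨ y_i χ_i`. By submodularity and monotonicity the value of
the join of all these vectors exceeds `f b` by at most the sum of the individual marginal gains, each
of which is at most `T · y_i` (it is zero where `y_i ≤ b_i`). The join dominates `y`, so
`f y ≤ f b + T · Σ y_i ≤ f b + T · B`.
-/

open Finset

section Submodular

variable {α β : Type*} [Lattice α] [AddCommGroup β] [PartialOrder β] [IsOrderedAddMonoid β]
  {f : α → β}

theorem Monotone.sup_add_le_add_of_submodular (hf : Monotone f)
    (hsub : ∀ x y, f (x ⊔ y) + f (x ⊓ y) ≤ f x + f y) {b x y : α} (hx : b ≤ x) (hy : b ≤ y) :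
    f (x ⊔ y) + f b ≤ f x + f y :=
  (add_le_add_right (hf (le_inf hx hy)) _).trans (hsub x y)

theorem Monotone.sup_le_add_sum_sub_of_submodular [OrderBot α] {ι : Type*} (hf : Monotone f)
    (hsub : ∀ x y, f (x ⊔ y) + f (x ⊓ y) ≤ f x + f y) (b : α) (z : ι → α) (s : Finset ι) :
    f (b ⊔ s.sup z) ≤ f b + ∑ i ∈ s, (f (b ⊔ z i) - f b) := by
  classical
  induction s using Finset.induction_on with
  | empty => simp
  | insert a s ha ih =>
    have hjoin : b ⊔ (insert a s).sup z = (b ⊔ z a) ⊔ (b ⊔ s.sup z) := by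
      rw [sup_insert, sup_sup_distrib_left]
    have hstep := hf.sup_add_le_add_of_submodular hsub (le_sup_left : b ≤ b ⊔ z a)
      (le_sup_left : b ≤ b ⊔ s.sup z)
    rw [hjoin, sum_insert ha]
    calc f ((b ⊔ z a) ⊔ (b ⊔ s.sup z))
        ≤ f (b ⊔ z a) + f (b ⊔ s.sup z) - f b := le_sub_iff_add_le.mpr hstep
      _ ≤ f (b ⊔ z a) + (f b + ∑ i ∈ s, (f (b ⊔ z i) - f b)) - f b := by gcongr
      _ = f b + (f (b ⊔ z a) - f b + ∑ i ∈ s, (f (b ⊔ z i) - f b)) := by abel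

end Submodular

theorem le_univ_sup_ite_self {ι M : Type*} [Fintype ι] [DecidableEq ι] [Lattice M] [OrderBot M]
    [Zero M] (y : ι → M) : y ≤ univ.sup fun i j => if j = i then y i else 0 := by
  intro j
  rw [Finset.sup_apply]
  exact le_sup_of_le (mem_univ j) (if_pos rfl).ge

theorem below_threshold_bound_general {n : ℕ} (f : (Fin n → ℕ) → ℝ)
    (hf_mono : Monotone f)
    (hf_submod : ∀ x y : Fin n → ℕ, f (x ⊔ y) + f (x ⊓ y) ≤ f x + f y)
    (b y : Fin n → ℕ) (B T : ℝ) (hT : 0 ≤ T)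
    (hy_budget : (∑ i, (y i : ℝ)) ≤ B)
    (h_thresh : ∀ i : Fin n, b i < y i →
      f (b ⊔ fun j => if j = i then y i else 0) - f b ≤ T * (y i : ℝ)) :
    f y ≤ f b + T * B := by
  have h_gain (i : Fin n) : f (b ⊔ fun j => if j = i then y i else 0) - f b ≤ T * (y i : ℝ) := by
    rcases lt_or_ge (b i) (y i) with hlt | hle
    · exact h_thresh i hlt
    · have hb : (b ⊔ fun j => if j = i then y i else 0) = b :=
        sup_eq_left.mpr fun j => by split_ifs with h <;> simp [h, hle]
      rw [hb, sub_self]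
      positivity
  calc f y ≤ f (b ⊔ univ.sup fun i j => if j = i then y i else 0) :=
        hf_mono ((le_univ_sup_ite_self y).trans le_sup_right)
    _ ≤ f b + ∑ i, (f (b ⊔ fun j => if j = i then y i else 0) - f b) :=
        hf_mono.sup_le_add_sum_sub_of_submodular hf_submod b _ univ
    _ ≤ f b + T * ∑ i, (y i : ℝ) := by
        rw [mul_sum]
        gcongr with i
        exact h_gain i
    _ ≤ f b + T * B := by gcongr

open Finset in
/-- If every coordinate where the benchmark `y` exceeds the current allocation
`b` has marginal value per unit at most `T`, and the benchmark uses at most `B`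
units of budget, then `f(y) ≤ f(b) + T·B`. -/
theorem below_threshold_bound {n : ℕ} (f : (Fin n → ℕ) → ℝ)
    (hf_nonneg : ∀ x, 0 ≤ f x)
    (hf_mono : Monotone f)
    (hf_submod : ∀ x y : Fin n → ℕ, f (x ⊔ y) + f (x ⊓ y) ≤ f x + f y)
    (b y : Fin n → ℕ) (B T : ℝ) (hB : 0 < B) (hT : 0 ≤ T)
    (hy_budget : (∑ i, (y i : ℝ)) ≤ B)
    (h_thresh : ∀ i : Fin n, b i < y i →
      f (b ⊔ fun j => if j = i then y i else 0) - f b ≤ T * (y i : ℝ)) :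
    f y ≤ f b + T * B :=
  below_threshold_bound_general f hf_mono hf_submod b y B T hT hy_budget h_thresh
end

section
/- Let f : ℕ^n → ℝ≥0 be monotone and submodular over the integer lattice, let b, y ∈ ℕ^n, let B > 0, T ≥ 0, V ≥ 0 be reals, and let ℓ ∈ [n] be a coordinate such that Σ_{i ≠ ℓ} y_i ≤ B/2, f(b ∨ y_ℓ χ_ℓ) − f(b) ≤ V, and for every coordinate i ≠ ℓ with y_i > b_i it holds that f(b ∨ y_i χ_i) − f(b) ≤ T · y_i. Then f(y) ≤ f(b) + V + T · B / 2. -/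
/-!
The vectors `y i • χ i` are pairwise disjoint, so in the distributive lattice `ℕ^n` joining
them into `b` one at a time meets each previous stage exactly in `b`; submodularity then bounds
`f (b ⊔ y) - f b` by the sum of the single-coordinate marginals at `b`. Coordinate `ℓ`
contributes at most `V`, and every other one at most `T * y i` (zero when `y i ≤ b i`).
-/

open Finset

theorem submodular_sup_finsetSup_le {α ι : Type*} [DistribLattice α] [OrderBot α]
    {f : α → ℝ} (hf : ∀ x y, f (x ⊔ y) + f (x ⊓ y) ≤ f x + f y)
    (b : α) (z : ι → α) (s : Finset ι) (hz : (s : Set ι).PairwiseDisjoint z) :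
    f (b ⊔ s.sup z) ≤ f b + ∑ i ∈ s, (f (b ⊔ z i) - f b) := by
  classical
  induction s using Finset.induction with
  | empty => simp
  | @insert a s ha ih =>
    have hdisj : Disjoint (s.sup z) (z a) :=
      Finset.disjoint_sup_left.2 fun i hi =>
        hz (by simp [hi]) (by simp) (ne_of_mem_of_not_mem hi ha)
    have hmeet : (b ⊔ s.sup z) ⊓ (b ⊔ z a) = b := by
      rw [← sup_inf_left, hdisj.eq_bot, sup_bot_eq]
    have hjoin : (b ⊔ s.sup z) ⊔ (b ⊔ z a) = b ⊔ (z a ⊔ s.sup z) := by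
      rw [← sup_sup_distrib_left, sup_comm (s.sup z)]
    have hsub := hf (b ⊔ s.sup z) (b ⊔ z a)
    rw [hmeet, hjoin] at hsub
    rw [sup_insert, sum_insert ha]
    linarith [ih (hz.subset (by simp))]

section Coordinate

variable {ι : Type*} [DecidableEq ι]

theorem pairwiseDisjoint_ite_eq (y : ι → ℕ) (s : Set ι) :
    s.PairwiseDisjoint fun i j => if j = i then y i else 0 := by
  intro i _ k _ hik
  refine disjoint_iff.2 (funext fun j => ?_)
  by_cases hj : j = i <;> simp [hj, hik]

theorem univ_sup_ite_eq [Fintype ι] (y : ι → ℕ) :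
    univ.sup (fun i j => if j = i then y i else 0) = y := by
  refine le_antisymm (Finset.sup_le fun i _ j => ?_) fun j => ?_
  · by_cases hj : j = i
    · subst hj; simp
    · simp [hj]
  · simpa using le_sup (f := fun i j => if j = i then y i else 0) (mem_univ j) j

theorem sup_ite_eq_left {b y : ι → ℕ} {i : ι} (h : y i ≤ b i) :
    (b ⊔ fun j => if j = i then y i else 0) = b := by
  ext j
  by_cases hj : j = i
  · subst hj; simpa
  · simp [hj]


open Finset in
theorem big_agent_bound_general {n : ℕ} (f : (Fin n → ℕ) → ℝ)
    (hf_mono : Monotone f)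
    (hf_submod : ∀ x y : Fin n → ℕ, f (x ⊔ y) + f (x ⊓ y) ≤ f x + f y)
    (b y : Fin n → ℕ) (B T V : ℝ) (hT : 0 ≤ T)
    (ℓ : Fin n)
    (hy_budget : (∑ i ∈ Finset.univ.erase ℓ, (y i : ℝ)) ≤ B / 2)
    (hℓ : f (b ⊔ fun j => if j = ℓ then y ℓ else 0) - f b ≤ V)
    (h_thresh : ∀ i : Fin n, i ≠ ℓ → b i < y i →
      f (b ⊔ fun j => if j = i then y i else 0) - f b ≤ T * (y i : ℝ)) :
    f y ≤ f b + V + T * B / 2 := by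
  set z : Fin n → Fin n → ℕ := fun i j => if j = i then y i else 0
  have h_other : ∀ i ∈ univ.erase ℓ, f (b ⊔ z i) - f b ≤ T * (y i : ℝ) := by
    intro i hi
    rcases lt_or_ge (b i) (y i) with hlt | hge
    · exact h_thresh i (ne_of_mem_erase hi) hlt
    · rw [sup_ite_eq_left hge, sub_self]
      positivity
  calc f y ≤ f (b ⊔ univ.sup z) := hf_mono (by rw [univ_sup_ite_eq]; exact le_sup_right)
    _ ≤ f b + ∑ i, (f (b ⊔ z i) - f b) :=
      submodular_sup_finsetSup_le hf_submod b z univ (pairwiseDisjoint_ite_eq y _)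
    _ = f b + (f (b ⊔ z ℓ) - f b) + ∑ i ∈ univ.erase ℓ, (f (b ⊔ z i) - f b) := by
      rw [← add_sum_erase _ _ (mem_univ ℓ), add_assoc]
    _ ≤ f b + V + T * ∑ i ∈ univ.erase ℓ, (y i : ℝ) := by
      rw [mul_sum]
      gcongr with i hi
      exact h_other i hi
    _ ≤ f b + V + T * B / 2 := by
      rw [mul_div_assoc]
      gcongr

open Finset in
/-- The case of the online analysis in which one agent `ℓ` receives more than
half of the benchmark budget: if `Σ_{i ≠ ℓ} y_i ≤ B/2`, the marginal value of
raising coordinate `ℓ` to `y_ℓ` is at most `V`, and every other coordinate with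
`y_i > b_i` has marginal value per unit at most `T`, then
`f(y) ≤ f(b) + V + T·B/2`. -/
theorem big_agent_bound {n : ℕ} (f : (Fin n → ℕ) → ℝ)
    (hf_nonneg : ∀ x, 0 ≤ f x)
    (hf_mono : Monotone f)
    (hf_submod : ∀ x y : Fin n → ℕ, f (x ⊔ y) + f (x ⊓ y) ≤ f x + f y)
    (b y : Fin n → ℕ) (B T V : ℝ) (hB : 0 < B) (hT : 0 ≤ T) (hV : 0 ≤ V)
    (ℓ : Fin n)
    (hy_budget : (∑ i ∈ Finset.univ.erase ℓ, (y i : ℝ)) ≤ B / 2)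
    (hℓ : f (b ⊔ fun j => if j = ℓ then y ℓ else 0) - f b ≤ V)
    (h_thresh : ∀ i : Fin n, i ≠ ℓ → b i < y i →
      f (b ⊔ fun j => if j = i then y i else 0) - f b ≤ T * (y i : ℝ)) :
    f y ≤ f b + V + T * B / 2 :=
  big_agent_bound_general f hf_mono hf_submod b y B T V hT ℓ hy_budget hℓ h_thresh
end Coordinate
end

section
/- Let f : ℕ^n → ℝ≥0 be monotone and submodular over the integer lattice and let v ∈ ℕ^n. For each i ∈ [n], let v_{<i} ∈ ℕ^n be the vector that agrees with v on coordinates j < i and is 0 on coordinates j ≥ i, and define the marginal weight w_i = f(v_{<i} ∨ v_i χ_i) − f(v_{<i}). Then for every subset S ⊆ [n], letting v_S be the vector that agrees with v on coordinates in S and is 0 elsewhere, it holds that f(v_S) − f(0) ≥ Σ_{i ∈ S} w_i. -/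
/-!
Add the coordinates of `S` in increasing order. When `a` is the largest element of
`insert a s`, submodularity applied to `v_{<a}` and `v_{insert a s}`, whose join is `v_{≤a}`
and whose meet is `v_s`, says that the marginal value `w_a` of coordinate `a` on top of the
larger prefix `v_{<a}` is at most its marginal value on top of `v_s`. Summing these
diminishing-returns inequalities telescopes to the claim.
-/

namespace Set

variable {ι M : Type*} [Zero M] [Lattice M] {v : ι → M}

theorem indicator_sup_indicator (hv : 0 ≤ v) (s t : Set ι) :
    s.indicator v ⊔ t.indicator v = (s ∪ t).indicator v := by
  ext j
  have hj : 0 ≤ v j := hv j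
  by_cases hs : j ∈ s <;> by_cases ht : j ∈ t <;> simp [hs, ht, hj]

theorem indicator_inf_indicator (hv : 0 ≤ v) (s t : Set ι) :
    s.indicator v ⊓ t.indicator v = (s ∩ t).indicator v := by
  ext j
  have hj : 0 ≤ v j := hv j
  by_cases hs : j ∈ s <;> by_cases ht : j ∈ t <;> simp [hs, ht, hj]

end Set

theorem sub_le_sub_of_submodular {α : Type*} [Lattice α] {f : α → ℝ}
    (hf : ∀ x y, f (x ⊔ y) + f (x ⊓ y) ≤ f x + f y) (x y : α) :
    f (x ⊔ y) - f x ≤ f y - f (x ⊓ y) := by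
  linarith [hf x y]

open Finset in
theorem sum_indicator_Iic_sub_Iio_le {ι M : Type*} [LinearOrder ι] [Zero M] [Lattice M]
    {f : (ι → M) → ℝ} (hf : ∀ x y, f (x ⊔ y) + f (x ⊓ y) ≤ f x + f y)
    {v : ι → M} (hv : 0 ≤ v) (S : Finset ι) :
    ∑ i ∈ S, (f ((Set.Iic i).indicator v) - f ((Set.Iio i).indicator v)) ≤
      f ((S : Set ι).indicator v) - f 0 := by
  induction S using Finset.induction_on_max with
  | empty => simp only [sum_empty, coe_empty, Set.indicator_empty', sub_self, le_refl]
  | insert a s hlt ih =>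
    have ha : a ∉ s := fun h => lt_irrefl a (hlt a h)
    have hsub : (s : Set ι) ⊆ Set.Iio a := fun j hj => hlt j hj
    have hsup : Set.Iio a ∪ ↑(insert a s) = Set.Iic a := by
      rw [coe_insert, ← Set.Iio_insert, Set.union_insert, Set.union_eq_left.2 hsub]
    have hinf : Set.Iio a ∩ ↑(insert a s) = ↑s := by
      rw [coe_insert, Set.inter_insert_of_notMem Set.self_notMem_Iio, Set.inter_eq_right.2 hsub]
    have hstep := sub_le_sub_of_submodular hf ((Set.Iio a).indicator v)
      ((↑(insert a s) : Set ι).indicator v)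
    rw [Set.indicator_sup_indicator hv, Set.indicator_inf_indicator hv, hsup, hinf] at hstep
    rw [sum_insert ha]
    linarith

open Finset in
theorem restriction_value_ge_weight_sum_general {n : ℕ} (f : (Fin n → ℕ) → ℝ)
    (hf_submod : ∀ x y : Fin n → ℕ, f (x ⊔ y) + f (x ⊓ y) ≤ f x + f y)
    (v : Fin n → ℕ) (S : Finset (Fin n)) :
    ∑ i ∈ S,
        (f ((fun j => if j < i then v j else 0) ⊔ fun j => if j = i then v i else 0)
          - f (fun j => if j < i then v j else 0)) ≤
      f (fun j => if j ∈ S then v j else 0) - f 0 := by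
  have hv : 0 ≤ v := fun j => Nat.zero_le (v j)
  have hprefix (i : Fin n) : (fun j => if j < i then v j else 0) = (Set.Iio i).indicator v := by
    ext j; simp [Set.indicator_apply]
  have hsingle (i : Fin n) :
      (fun j => if j = i then v i else 0) = ({i} : Set (Fin n)).indicator v := by
    ext j; by_cases h : j = i <;> simp [h]
  have hrestrict : (fun j => if j ∈ S then v j else 0) = (S : Set (Fin n)).indicator v := by
    ext j; simp [Set.indicator_apply]
  simp only [hprefix, hsingle, hrestrict, Set.indicator_sup_indicator hv, Set.union_singleton,
    Set.Iio_insert]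
  exact sum_indicator_Iic_sub_Iio_le hf_submod hv S

open Finset in
/-- Decomposing the value of an allocation `v` along a fixed order of the
coordinates: with `w_i = f(v_{<i} ∨ v_i χ_i) − f(v_{<i})`, the restriction `v_S`
of `v` to any coordinate subset `S` satisfies `f(v_S) − f(0) ≥ Σ_{i ∈ S} w_i`. -/
theorem restriction_value_ge_weight_sum {n : ℕ} (f : (Fin n → ℕ) → ℝ)
    (hf_nonneg : ∀ x, 0 ≤ f x)
    (hf_mono : Monotone f)
    (hf_submod : ∀ x y : Fin n → ℕ, f (x ⊔ y) + f (x ⊓ y) ≤ f x + f y)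
    (v : Fin n → ℕ) (S : Finset (Fin n)) :
    ∑ i ∈ S,
        (f ((fun j => if j < i then v j else 0) ⊔ fun j => if j = i then v i else 0)
          - f (fun j => if j < i then v j else 0)) ≤
      f (fun j => if j ∈ S then v j else 0) - f 0 :=
  restriction_value_ge_weight_sum_general f hf_submod v S
end
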